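/- Let S ⊆ S' be saturated multiplicatively closed subsets of R and T = S^{-1}S'. Assume S splits M, S' \ Ann(M) is compactly S-atomic (as a subset of the R-module R), and S ∩ Z(M) = S ∩ Z(R) = ∅. Let y_1, y_2 ∈ S' \ (S ∪ Ann(M)) be irreducible and let 0 ≠ m_1, m_2 ∈ M be S'-primitive. Then y_1/1 ∼ y_2/1 in R_S if and only if y_1 ∼ y_2 in R, and m_1/1 ∼^T m_2/1 in M_S if and only if m_1 ∼^{S'} m_2 in M. -/

import Mathlib

namespace FactorizationPaper

variable {R : Type*} [CommRing R]

/-- `S` is a saturated multiplicatively closed subset of `R`: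
it contains `1`, is closed under multiplication, and `x*y ∈ S` implies `x ∈ S` and `y ∈ S`. -/
def Saturated (S : Set R) : Prop :=
  1 ∈ S ∧ (∀ x ∈ S, ∀ y ∈ S, x * y ∈ S) ∧ ∀ x y : R, x * y ∈ S → x ∈ S ∧ y ∈ S

/-- The submonoid of `R` associated to a saturated multiplicatively closed set. -/
def Saturated.submonoid {S : Set R} (hS : Saturated S) : Submonoid R where
  carrier := S
  one_mem' := hS.1
  mul_mem' := fun {a b} ha hb => hS.2.1 a ha b hb

section ElementDefs

variable (S : Set R) {N : Type*} [AddCommGroup N] [Module R N]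

/-- `m ∼^S n` : `m` and `n` are S-associates. -/
def SAssoc (m n : N) : Prop := (∃ s ∈ S, m = s • n) ∧ (∃ s ∈ S, n = s • m)

/-- `m ≈^S n` : `m` and `n` are S-strong associates. -/
def SStrongAssoc (m n : N) : Prop := ∃ u : R, IsUnit u ∧ u ∈ S ∧ m = u • n

/-- `m ≅^S n` : `m` and `n` are S-very strong associates. -/
def SVeryStrongAssoc (m n : N) : Prop :=
  SAssoc S m n ∧ ((m = 0 ∧ n = 0) ∨ ∀ s ∈ S, m = s • n → IsUnit s)

/-- `m` is S-primitive. -/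
def SPrimitive (m : N) : Prop := ∀ s ∈ S, ∀ n : N, m = s • n → SAssoc S n m

/-- `m` is S-strongly primitive. -/
def SStronglyPrimitive (m : N) : Prop := ∀ s ∈ S, ∀ n : N, m = s • n → SStrongAssoc S n m

/-- `m` is S-very strongly primitive. -/
def SVeryStronglyPrimitive (m : N) : Prop := ∀ s ∈ S, ∀ n : N, m = s • n → SVeryStrongAssoc S n m

/-- the three kinds of S-primitivity, indexed by `Fin 3` :
`0` = primitive, `1` = strongly primitive, `2` = very strongly primitive. -/
def PrimOf (k : Fin 3) (m : N) : Prop :=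
  match k with
  | 0 => SPrimitive S m
  | 1 => SStronglyPrimitive S m
  | 2 => SVeryStronglyPrimitive S m

/-- `m = s • n` is a compact S-atomic factorization of `m`. -/
def IsCompactFactorization (m : N) (s : R) (n : N) : Prop :=
  s ∈ S ∧ SPrimitive S n ∧ m = s • n

/-- `m = s₁ ⋯ s_k • n` (with the `sᵢ` the members of the list `l`, nonunits in `S`)
is an S-factorization of `m`, of length `l.length`. -/
def IsSFactorization (m : N) (l : List R) (n : N) : Prop :=
  (∀ s ∈ l, s ∈ S ∧ ¬ IsUnit s) ∧ m = l.prod • n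

end ElementDefs

/-- `a ∼ b` : associates in `R` (i.e. S-associates with `S = R`, in `R` as an `R`-module). -/
def Assoc (a b : R) : Prop := SAssoc (Set.univ : Set R) a b

/-- `a ≈ b` : strong associates in `R`. -/
def StrongAssoc (a b : R) : Prop := SStrongAssoc (Set.univ : Set R) a b

/-- `a ≅ b` : very strong associates in `R`. -/
def VeryStrongAssoc (a b : R) : Prop := SVeryStrongAssoc (Set.univ : Set R) a b

/-- `a` is irreducible. -/
def Irred (a : R) : Prop := ¬ IsUnit a ∧ ∀ b c : R, a = b * c → Assoc a b ∨ Assoc a c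

/-- `a` is strongly irreducible. -/
def StrongIrred (a : R) : Prop :=
  ¬ IsUnit a ∧ ∀ b c : R, a = b * c → StrongAssoc a b ∨ StrongAssoc a c

/-- `a` is very strongly irreducible. -/
def VeryStrongIrred (a : R) : Prop :=
  ¬ IsUnit a ∧ ∀ b c : R, a = b * c → VeryStrongAssoc a b ∨ VeryStrongAssoc a c

/-- the three kinds of irreducibility, indexed by `Fin 3` :
`0` = irreducible, `1` = strongly irreducible, `2` = very strongly irreducible. -/
def IrredOf (k : Fin 3) (a : R) : Prop :=
  match k with
  | 0 => Irred a
  | 1 => StrongIrred a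
  | 2 => VeryStrongIrred a

section ElementDefs2

variable (S : Set R) {N : Type*} [AddCommGroup N] [Module R N]

/-- `m = s₁ ⋯ s_k • n` is an S-atomic factorization
(each `sᵢ` irreducible and in `S`, `n` S-primitive). -/
def IsSAtomicFactorization (m : N) (l : List R) (n : N) : Prop :=
  IsSFactorization S m l n ∧ (∀ s ∈ l, Irred s) ∧ SPrimitive S n

/-- an (α, β)-S-factorization: each `sᵢ` is α (a kind of irreducible)
and `n` is S-β (a kind of S-primitive). -/
def IsABFactorization (kα kβ : Fin 3) (m : N) (l : List R) (n : N) : Prop :=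
  IsSFactorization S m l n ∧ (∀ s ∈ l, IrredOf kα s) ∧ PrimOf S kβ n

/-- Isomorphism of S-atomic factorizations: same length, S-associate primitive parts,
and the irreducible parts match up to permutation and associates. -/
def FactorIso (l : List R) (n : N) (l' : List R) (n' : N) : Prop :=
  l.length = l'.length ∧ SAssoc S n n' ∧
    ∃ l'' : List R, l'.Perm l'' ∧ List.Forall₂ Assoc l l''

end ElementDefs2

section SetDefs

variable (S : Set R) {N : Type*} [AddCommGroup N] [Module R N]

/-- `E ⊆ N` is compactly S-atomic. -/
def CompactlySAtomic (E : Set N) : Prop :=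
  ∀ m ∈ E, m ≠ 0 → ∃ s n, IsCompactFactorization S m s n

/-- `E ⊆ N` is semi-S-factorable. -/
def SemiSFactorable (E : Set N) : Prop :=
  CompactlySAtomic S E ∧ ∀ m ∈ E, m ≠ 0 → ∀ s n s' n',
    IsCompactFactorization S m s n → IsCompactFactorization S m s' n' → Assoc s s'

/-- `E ⊆ N` is S-factorable. -/
def SFactorable (E : Set N) : Prop :=
  SemiSFactorable S E ∧ ∀ m ∈ E, m ≠ 0 → ∀ s n s' n',
    IsCompactFactorization S m s n → IsCompactFactorization S m s' n' → SAssoc S n n'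

/-- `S` splits `E ⊆ N`. -/
def Splits (E : Set N) : Prop :=
  SemiSFactorable S E ∧
    ∀ r : R, SPrimitive S r → ∀ m : N, SPrimitive S m →
      r • m ≠ 0 → r • m ∈ E → SPrimitive S (r • m)

end SetDefs

/-- The set of zero divisors of the module `M` in `R`. -/
def ZDiv (R : Type*) [CommRing R] (M : Type*) [AddCommGroup M] [Module R M] : Set R :=
  {r : R | ∃ m : M, m ≠ 0 ∧ r • m = 0}

/-- The annihilator of `M` in `R`, as a set. -/
def AnnSet (R : Type*) [CommRing R] (M : Type*) [AddCommGroup M] [Module R M] : Set R :=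
  {r : R | ∀ m : M, r • m = 0}

/-- The annihilator of `M` in `R`, as an ideal. -/
def AnnIdeal (R : Type*) [CommRing R] (M : Type*) [AddCommGroup M] [Module R M] : Ideal R where
  carrier := AnnSet R M
  zero_mem' := fun m => zero_smul R m
  add_mem' := fun {a b} ha hb m => by
    rw [add_smul, ha m, hb m, add_zero]
  smul_mem' := fun c x hx m => by
    rw [smul_eq_mul, mul_smul, hx m, smul_zero]

section ModuleProps

variable (S : Set R) (N : Type*) [AddCommGroup N] [Module R N]

/-- `N` is S-présimplifiable. -/
def SPresimplifiable : Prop := ∀ s ∈ S, ∀ m : N, s • m = m → IsUnit s ∨ m = 0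

/-- `N` is S-atomic. -/
def SAtomicModule : Prop := ∀ m : N, m ≠ 0 → ∃ l n, IsSAtomicFactorization S m l n

/-- `N` is (α, β)-S-atomic. -/
def ABAtomicModule (kα kβ : Fin 3) : Prop :=
  ∀ m : N, m ≠ 0 → ∃ l n, IsABFactorization S kα kβ m l n

/-- `N` is an S-UFM. -/
def SUFM : Prop := SAtomicModule S N ∧ ∀ m : N, m ≠ 0 → ∀ l n l' n',
  IsSAtomicFactorization S m l n → IsSAtomicFactorization S m l' n' → FactorIso S l n l' n'

/-- `N` is an S-FFM. -/
def SFFM : Prop := SAtomicModule S N ∧ ∀ m : N, m ≠ 0 →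
  ∃ Fs : Set (List R × N), Fs.Finite ∧
    ∀ l n, IsSAtomicFactorization S m l n → ∃ p ∈ Fs, FactorIso S l n p.1 p.2

/-- `N` is an S-BFM. -/
def SBFM : Prop := ∀ m : N, m ≠ 0 → ∃ B : ℕ,
  ∀ l n, IsSFactorization S m l n → l.length ≤ B

/-- `N` is an S-HFM. -/
def SHFM : Prop := SAtomicModule S N ∧ ∀ m : N, m ≠ 0 → ∀ l n l' n',
  IsSAtomicFactorization S m l n → IsSAtomicFactorization S m l' n' → l.length = l'.length

end ModuleProps

section InE

variable (E : Set R)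

/-- `R` is présimplifiable in `E`. -/
def PresimpIn : Prop := ∀ a ∈ E, a ≠ 0 → ¬ IsUnit a → ∀ r : R, a = r * a → IsUnit r ∨ a = 0

/-- `R` is atomic in `E`. -/
def AtomicIn : Prop := ∀ a ∈ E, a ≠ 0 → ¬ IsUnit a →
  ∃ l n, IsSAtomicFactorization (Set.univ : Set R) a l n

/-- `R` has unique factorization in `E`. -/
def UFIn : Prop := AtomicIn E ∧ ∀ a ∈ E, a ≠ 0 → ¬ IsUnit a → ∀ l n l' n',
  IsSAtomicFactorization (Set.univ : Set R) a l n →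
  IsSAtomicFactorization (Set.univ : Set R) a l' n' →
  FactorIso (Set.univ : Set R) l n l' n'

/-- `R` has finite factorization in `E`. -/
def FFIn : Prop := AtomicIn E ∧ ∀ a ∈ E, a ≠ 0 → ¬ IsUnit a →
  ∃ Fs : Set (List R × R), Fs.Finite ∧ ∀ l n,
    IsSAtomicFactorization (Set.univ : Set R) a l n →
      ∃ p ∈ Fs, FactorIso (Set.univ : Set R) l n p.1 p.2

/-- `R` is half factorial in `E`. -/
def HFIn : Prop := AtomicIn E ∧ ∀ a ∈ E, a ≠ 0 → ¬ IsUnit a → ∀ l n l' n',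
  IsSAtomicFactorization (Set.univ : Set R) a l n →
  IsSAtomicFactorization (Set.univ : Set R) a l' n' → l.length = l'.length

/-- `R` has bounded factorization in `E`. -/
def BFIn : Prop := ∀ a ∈ E, a ≠ 0 → ¬ IsUnit a →
  ∃ B : ℕ, ∀ l n, IsSFactorization (Set.univ : Set R) a l n → l.length ≤ B

end InE

/-- The set `T = S⁻¹S'` in the localization `R_S`. -/
def locT {S : Set R} (hS : Saturated S) (S' : Set R) : Set (Localization hS.submonoid) :=
  {x | ∃ s' ∈ S', ∃ t : hS.submonoid, x = Localization.mk s' t}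

section DomainDefs

variable (D : Type*) [CommRing D]

/-- two lists of ring elements agree up to order and associates. -/
def ListAssociated (l l' : List D) : Prop :=
  ∃ l'' : List D, l'.Perm l'' ∧ List.Forall₂ Associated l l''

/-- `D` is atomic: every nonzero nonunit is a finite product of irreducibles. -/
def DomAtomic : Prop := ∀ x : D, x ≠ 0 → ¬ IsUnit x →
  ∃ l : List D, (∀ a ∈ l, Irreducible a) ∧ x = l.prod

/-- `D` is a bounded factorization domain. -/
def DomBFD : Prop := ∀ x : D, x ≠ 0 → ¬ IsUnit x →
  ∃ B : ℕ, ∀ l : List D, (∀ a ∈ l, ¬ IsUnit a) → x = l.prod → l.length ≤ B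

/-- `D` is a half factorial domain. -/
def DomHFD : Prop := DomAtomic D ∧ ∀ x : D, x ≠ 0 → ¬ IsUnit x →
  ∀ l l' : List D, (∀ a ∈ l, Irreducible a) → x = l.prod →
    (∀ a ∈ l', Irreducible a) → x = l'.prod → l.length = l'.length

/-- `D` is a finite factorization domain. -/
def DomFFD : Prop := DomAtomic D ∧ ∀ x : D, x ≠ 0 → ¬ IsUnit x →
  ∃ Fs : Set (List D), Fs.Finite ∧ ∀ l : List D, (∀ a ∈ l, Irreducible a) → x = l.prod →
    ∃ l' ∈ Fs, ListAssociated D l l'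

/-- `D` is a unique factorization domain. -/
def DomUFD : Prop := DomAtomic D ∧ ∀ x : D, x ≠ 0 → ¬ IsUnit x →
  ∀ l l' : List D, (∀ a ∈ l, Irreducible a) → x = l.prod →
    (∀ a ∈ l', Irreducible a) → x = l'.prod → ListAssociated D l l'

end DomainDefs

section AXBXdefs

variable (B : Type*) [CommRing B] (A : Subring B)

/-- The ring `R = A + X·B[X]`, as a subring of `B[X]`. -/
def AXBX : Subring (Polynomial B) where
  carrier := {f | f.coeff 0 ∈ A}
  zero_mem' := by simp only [Set.mem_setOf_eq, Polynomial.coeff_zero]; exact zero_mem A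
  one_mem' := by
    simp only [Set.mem_setOf_eq, Polynomial.coeff_one, if_pos rfl]
    exact one_mem A
  add_mem' := fun {f g} hf hg => by
    simp only [Set.mem_setOf_eq, Polynomial.coeff_add] at *
    exact add_mem hf hg
  neg_mem' := fun {f} hf => by
    simp only [Set.mem_setOf_eq, Polynomial.coeff_neg] at *
    exact neg_mem hf
  mul_mem' := fun {f g} hf hg => by
    simp only [Set.mem_setOf_eq, Polynomial.mul_coeff_zero] at *
    exact mul_mem hf hg

/-- The saturated multiplicatively closed subset `S = (U(B) ∩ A) ∪ {u·Xⁿ : u ∈ U(B), n ≥ 1}`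
of `R = A + X·B[X]`. -/
def Sset : Set (AXBX B A) :=
  {f | (∃ u : B, IsUnit u ∧ u ∈ A ∧ (f : Polynomial B) = Polynomial.C u) ∨
       (∃ u : B, IsUnit u ∧ ∃ n : ℕ, 1 ≤ n ∧
          (f : Polynomial B) = Polynomial.C u * Polynomial.X ^ n)}

/-- The saturated multiplicatively closed subset `S₀ = U(B) ∩ A` of `A`. -/
def S0set : Set A := {a : A | IsUnit (a : B)}

end AXBXdefs



/-!
Over `R_S` the relations to be compared become, after clearing denominators, `y₂ ∣ s * y₁` and
`s • m₁ = s' • m₂` with `s ∈ S`, `s' ∈ S'`; the task is to remove `s`. Since `S` splits `M`,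
multiplying an equation `σ * n = σ' * n'` (with `σ, σ' ∈ S` and `n, n'` S-primitive) by a
suitable S-primitive `p ∈ M` yields two compact S-atomic factorizations of one nonzero element of
`M`, so `σ ∼ σ'` by semi-S-factorability, and `σ` cancels because `S` contains no zero divisors.
An irreducible `y ∈ S' \ (S ∪ Ann(M))` is an associate of the S-primitive part of its compact
S-atomic factorization, which brings the ring case into this form.
-/

namespace Saturated

variable {S : Set R} {x y : R}

lemma mul_mem (hS : Saturated S) (hx : x ∈ S) (hy : y ∈ S) : x * y ∈ S := hS.2.1 x hx y hy

lemma left_mem_of_mul_mem (hS : Saturated S) (h : x * y ∈ S) : x ∈ S := (hS.2.2 x y h).1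

lemma right_mem_of_mul_mem (hS : Saturated S) (h : x * y ∈ S) : y ∈ S := (hS.2.2 x y h).2

end Saturated

lemma assoc_iff_dvd {a b : R} : Assoc a b ↔ b ∣ a ∧ a ∣ b := by
  simp only [Assoc, SAssoc, Set.mem_univ, true_and, smul_eq_mul, Dvd.dvd, mul_comm]

section Annihilator

variable {M : Type*} [AddCommGroup M] [Module R M] {S : Set R}

lemma ne_zero_of_notMem_annSet {r : R} (h : r ∉ AnnSet R M) : r ≠ 0 :=
  fun hr => h (hr ▸ (AnnIdeal R M).zero_mem)

lemma notMem_annSet_of_mul_left {a b : R} (h : a * b ∉ AnnSet R M) : b ∉ AnnSet R M :=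
  fun hb => h ((AnnIdeal R M).mul_mem_left a hb)

lemma notMem_annSet_of_mul_right {a b : R} (h : a * b ∉ AnnSet R M) : a ∉ AnnSet R M :=
  fun ha => h ((AnnIdeal R M).mul_mem_right b ha)

lemma smul_left_cancel_of_disjoint_zDiv (hZ : S ∩ ZDiv R M = ∅) {s : R} (hs : s ∈ S)
    {x y : M} (h : s • x = s • y) : x = y := by
  by_contra hne
  exact Set.eq_empty_iff_forall_notMem.mp hZ s
    ⟨hs, x - y, sub_ne_zero.mpr hne, by rw [smul_sub, h, sub_self]⟩

lemma smul_ne_zero_of_disjoint_zDiv (hZ : S ∩ ZDiv R M = ∅) {s : R} (hs : s ∈ S)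
    {x : M} (hx : x ≠ 0) : s • x ≠ 0 :=
  fun h => hx (smul_left_cancel_of_disjoint_zDiv hZ hs (by rw [h, smul_zero]))

lemma mul_notMem_annSet (hZ : S ∩ ZDiv R M = ∅) {s r : R} (hs : s ∈ S)
    (hr : r ∉ AnnSet R M) : s * r ∉ AnnSet R M := by
  intro h
  refine hr fun m => smul_left_cancel_of_disjoint_zDiv hZ hs ?_
  rw [← mul_smul, h m, smul_zero]

lemma exists_eq_smul_of_assoc (hZ : S ∩ ZDiv R M = ∅) {σ σ' : R} (hσ : σ ∈ S)
    (hassoc : Assoc σ σ') {n n' : M} (h : σ • n = σ' • n') :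
    ∃ e : R, n = e • n' ∧ σ' = e * σ := by
  obtain ⟨-, e, -, he⟩ := hassoc
  rw [smul_eq_mul] at he
  refine ⟨e, smul_left_cancel_of_disjoint_zDiv hZ hσ ?_, he⟩
  rw [h, he, smul_smul, mul_comm]

end Annihilator

namespace Splits

variable {M : Type*} [AddCommGroup M] [Module R M] {S : Set R}

lemma smul_sPrimitive (hsplit : Splits S (Set.univ : Set M)) {r : R} {m : M}
    (hr : SPrimitive S r) (hm : SPrimitive S m) (h : r • m ≠ 0) : SPrimitive S (r • m) :=
  hsplit.2 r hr m hm h trivial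

lemma assoc_of_smul_eq (hsplit : Splits S (Set.univ : Set M)) {σ σ' : R} {n n' : M}
    (hσ : σ ∈ S) (hσ' : σ' ∈ S) (hn : SPrimitive S n) (hn' : SPrimitive S n')
    (h0 : σ • n ≠ 0) (h : σ • n = σ' • n') : Assoc σ σ' :=
  hsplit.1.2 (σ • n) trivial h0 σ n σ' n' ⟨hσ, hn, rfl⟩ ⟨hσ', hn', h⟩

lemma exists_sPrimitive_smul_ne_zero (hsplit : Splits S (Set.univ : Set M)) {r : R}
    (hr : r ∉ AnnSet R M) : ∃ p : M, SPrimitive S p ∧ r • p ≠ 0 := by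
  obtain ⟨m, hm⟩ : ∃ m : M, r • m ≠ 0 := by simpa [AnnSet] using hr
  have hm0 : m ≠ 0 := fun h => hm (by rw [h, smul_zero])
  obtain ⟨τ, p, -, hp, rfl⟩ := hsplit.1.1 m trivial hm0
  exact ⟨p, hp, fun h => hm (by rw [smul_comm, h, smul_zero])⟩

end Splits

section Localization

variable {M : Type*} [AddCommGroup M] [Module R M]

lemma exists_dvd_mul_of_algebraMap_dvd {A : Type*} [CommRing A] [Algebra R A] (P : Submonoid R)
    [IsLocalization P A] {x y : R} (h : algebraMap R A y ∣ algebraMap R A x) :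
    ∃ s ∈ P, y ∣ s * x := by
  obtain ⟨z, hz⟩ := h
  obtain ⟨⟨a, t⟩, ht⟩ := IsLocalization.surj P z
  have hta : algebraMap R A (t * x) = algebraMap R A (y * a) := by
    rw [map_mul, map_mul, hz, ← ht]; ring
  obtain ⟨c, hc⟩ := IsLocalization.exists_of_eq (M := P) hta
  exact ⟨c * t, P.mul_mem c.2 t.2, c * a, by linear_combination hc⟩

lemma exists_smul_eq_smul_of_mk_eq_smul {S S' : Set R} (hS : Saturated S) (hS' : Saturated S')
    (hSS' : S ⊆ S') {m₁ m₂ : M} {t : Localization hS.submonoid} (ht : t ∈ locT hS S')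
    (h : LocalizedModule.mkLinearMap hS.submonoid M m₁ =
      t • LocalizedModule.mkLinearMap hS.submonoid M m₂) :
    ∃ s ∈ S, ∃ s' ∈ S', s • m₁ = s' • m₂ := by
  obtain ⟨s', hs', u, rfl⟩ := ht
  rw [LocalizedModule.mkLinearMap_apply, LocalizedModule.mkLinearMap_apply,
    LocalizedModule.mk_smul_mk, LocalizedModule.mk_eq] at h
  obtain ⟨c, hc⟩ := h
  simp only [Submonoid.smul_def, one_smul, mul_one, smul_smul] at hc
  exact ⟨c * u, hS.mul_mem c.2 u.2, c * s', hS'.mul_mem (hSS' c.2) hs', hc⟩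

end Localization

section Factorization

variable {M : Type*} [AddCommGroup M] [Module R M] {S S' : Set R}

lemma exists_sPrimitive_dvd_dvd_of_irred (hS : Saturated S)
    (hcompact : CompactlySAtomic S (S' \ AnnSet R M)) {y : R}
    (hy : y ∈ S' \ (S ∪ AnnSet R M)) (hyi : Irred y) :
    ∃ n : R, SPrimitive S n ∧ n ∣ y ∧ y ∣ n := by
  have hyann : y ∉ AnnSet R M := fun h => hy.2 (Or.inr h)
  obtain ⟨σ, n, hσ, hn, hyσn⟩ := hcompact y ⟨hy.1, hyann⟩ (ne_zero_of_notMem_annSet hyann)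
  refine ⟨n, hn, assoc_iff_dvd.mp ((hyi.2 σ n hyσn).resolve_left ?_)⟩
  rintro ⟨-, d, -, hd⟩
  rw [smul_eq_mul] at hd
  exact hy.2 (Or.inl (hS.right_mem_of_mul_mem (hd ▸ hσ)))

lemma dvd_of_dvd_mul_of_sPrimitive (hS' : Saturated S')
    (hsplit : Splits S (Set.univ : Set M)) (hcompact : CompactlySAtomic S (S' \ AnnSet R M))
    (hZR : S ∩ ZDiv R R = ∅) {s n₁ n₂ : R} (hs : s ∈ S)
    (hn₁ : SPrimitive S n₁) (hn₂ : SPrimitive S n₂) (hmem : s * n₁ ∈ S' \ AnnSet R M)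
    (h : n₂ ∣ s * n₁) : n₂ ∣ n₁ := by
  obtain ⟨b, hb⟩ := h
  have hbann : b ∉ AnnSet R M := notMem_annSet_of_mul_left (hb ▸ hmem.2)
  obtain ⟨α, k, hα, hk, hαk⟩ :=
    hcompact b ⟨hS'.right_mem_of_mul_mem (hb ▸ hmem.1), hbann⟩ (ne_zero_of_notMem_annSet hbann)
  rw [smul_eq_mul] at hαk
  have hfactor : s * n₁ = α * (k * n₂) := by rw [hb, hαk]; ring
  obtain ⟨p, hp, hp0⟩ := hsplit.exists_sPrimitive_smul_ne_zero hmem.2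
  have hleft : (s * n₁) • p = s • (n₁ • p) := mul_smul _ _ _
  have hright : (s * n₁) • p = α • (k • (n₂ • p)) := by rw [hfactor, mul_smul, mul_smul]
  have hn₁p : n₁ • p ≠ 0 := fun h0 => hp0 (by rw [hleft, h0, smul_zero])
  have hkn₂p : k • (n₂ • p) ≠ 0 := fun h0 => hp0 (by rw [hright, h0, smul_zero])
  have hn₂p : n₂ • p ≠ 0 := fun h0 => hkn₂p (by rw [h0, smul_zero])
  have hassoc : Assoc s α :=
    hsplit.assoc_of_smul_eq hs hα (hsplit.smul_sPrimitive hn₁ hp hn₁p)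
      (hsplit.smul_sPrimitive hk (hsplit.smul_sPrimitive hn₂ hp hn₂p) hkn₂p)
      (hleft ▸ hp0) (hleft ▸ hright)
  obtain ⟨e, he, -⟩ := exists_eq_smul_of_assoc hZR hs hassoc hfactor
  exact ⟨e * k, by rw [he, smul_eq_mul]; ring⟩

lemma dvd_of_dvd_mul_of_irred (hS : Saturated S) (hS' : Saturated S') (hSS' : S ⊆ S')
    (hsplit : Splits S (Set.univ : Set M)) (hcompact : CompactlySAtomic S (S' \ AnnSet R M))
    (hZM : S ∩ ZDiv R M = ∅) (hZR : S ∩ ZDiv R R = ∅) {y₁ y₂ s : R}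
    (hy₁ : y₁ ∈ S' \ (S ∪ AnnSet R M)) (hy₂ : y₂ ∈ S' \ (S ∪ AnnSet R M))
    (hy₁i : Irred y₁) (hy₂i : Irred y₂) (hs : s ∈ S) (h : y₂ ∣ s * y₁) : y₂ ∣ y₁ := by
  obtain ⟨n₁, hn₁, hn₁y₁, hy₁n₁⟩ := exists_sPrimitive_dvd_dvd_of_irred hS hcompact hy₁ hy₁i
  obtain ⟨n₂, hn₂, hn₂y₂, hy₂n₂⟩ := exists_sPrimitive_dvd_dvd_of_irred hS hcompact hy₂ hy₂i
  obtain ⟨c, hc⟩ := hn₁y₁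
  have hn₁ann : n₁ ∉ AnnSet R M := notMem_annSet_of_mul_right (hc ▸ fun h => hy₁.2 (Or.inr h))
  have hmem : s * n₁ ∈ S' \ AnnSet R M :=
    ⟨hS'.mul_mem (hSS' hs) (hS'.left_mem_of_mul_mem (hc ▸ hy₁.1)),
      mul_notMem_annSet hZM hs hn₁ann⟩
  have hn₂n₁ : n₂ ∣ n₁ :=
    dvd_of_dvd_mul_of_sPrimitive hS' hsplit hcompact hZR hs hn₁ hn₂ hmem
      ((hn₂y₂.trans h).trans (mul_dvd_mul_left s hy₁n₁))
  exact (hy₂n₂.trans hn₂n₁).trans ⟨c, hc⟩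

lemma exists_eq_smul_of_smul_eq_smul (hS : Saturated S) (hS' : Saturated S') (hSS' : S ⊆ S')
    (hsplit : Splits S (Set.univ : Set M)) (hcompact : CompactlySAtomic S (S' \ AnnSet R M))
    (hZM : S ∩ ZDiv R M = ∅) {m₁ m₂ : M} (hm₁ : m₁ ≠ 0) (hm₂ : SPrimitive S' m₂)
    {s s' : R} (hs : s ∈ S) (hs' : s' ∈ S') (h : s • m₁ = s' • m₂) :
    ∃ σ ∈ S', m₁ = σ • m₂ := by
  have h0 : s • m₁ ≠ 0 := smul_ne_zero_of_disjoint_zDiv hZM hs hm₁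
  have hs'ann : s' ∉ AnnSet R M := fun h' => h0 (by rw [h, h' m₂])
  obtain ⟨σ, n, hσ, hn, hσn⟩ := hcompact s' ⟨hs', hs'ann⟩ (ne_zero_of_notMem_annSet hs'ann)
  rw [smul_eq_mul] at hσn
  have hm₂0 : m₂ ≠ 0 := fun h' => h0 (by rw [h, h', smul_zero])
  obtain ⟨τ₂, p₂, hτ₂, hp₂, rfl⟩ := hsplit.1.1 m₂ trivial hm₂0
  obtain ⟨τ₁, p₁, hτ₁, hp₁, rfl⟩ := hsplit.1.1 m₁ trivial hm₁
  have hfactor : (s * τ₁) • p₁ = (σ * τ₂) • (n • p₂) := by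
    rw [mul_smul, h, hσn, smul_smul, smul_smul, mul_right_comm]
  have hnp₂ : n • p₂ ≠ 0 := fun h' => h0 (by rw [← mul_smul, hfactor, h', smul_zero])
  have hassoc : Assoc (s * τ₁) (σ * τ₂) :=
    hsplit.assoc_of_smul_eq (hS.mul_mem hs hτ₁) (hS.mul_mem hσ hτ₂) hp₁
      (hsplit.smul_sPrimitive hn hp₂ hnp₂) (by rwa [mul_smul]) hfactor
  obtain ⟨e, hp₁e, he⟩ := exists_eq_smul_of_assoc hZM (hS.mul_mem hs hτ₁) hassoc hfactor
  have heS' : e ∈ S' := hS'.left_mem_of_mul_mem (he ▸ hSS' (hS.mul_mem hσ hτ₂))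
  have hnS' : n ∈ S' := hS'.right_mem_of_mul_mem (hσn ▸ hs')
  obtain ⟨⟨g, hg, hp₂g⟩, -⟩ := hm₂ τ₂ (hSS' hτ₂) p₂ rfl
  refine ⟨τ₁ * e * n * g, hS'.mul_mem (hS'.mul_mem (hS'.mul_mem (hSS' hτ₁) heS') hnS') hg, ?_⟩
  rw [hp₁e, mul_smul _ g, ← hp₂g, smul_smul, smul_smul, mul_assoc]

lemma algebraMap_dvd_algebraMap_iff_of_irred (hS : Saturated S) (hS' : Saturated S')
    (hSS' : S ⊆ S') (hsplit : Splits S (Set.univ : Set M))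
    (hcompact : CompactlySAtomic S (S' \ AnnSet R M))
    (hZM : S ∩ ZDiv R M = ∅) (hZR : S ∩ ZDiv R R = ∅) ⦃y₁ y₂ : R⦄
    (hy₁ : y₁ ∈ S' \ (S ∪ AnnSet R M)) (hy₂ : y₂ ∈ S' \ (S ∪ AnnSet R M))
    (hy₁i : Irred y₁) (hy₂i : Irred y₂) :
    algebraMap R (Localization hS.submonoid) y₂ ∣ algebraMap R (Localization hS.submonoid) y₁ ↔
      y₂ ∣ y₁ := by
  refine ⟨fun h => ?_, map_dvd _⟩
  obtain ⟨s, hs, hdvd⟩ := exists_dvd_mul_of_algebraMap_dvd hS.submonoid h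
  exact dvd_of_dvd_mul_of_irred hS hS' hSS' hsplit hcompact hZM hZR hy₁ hy₂ hy₁i hy₂i hs hdvd

lemma exists_mk_eq_smul_iff (hS : Saturated S) (hS' : Saturated S') (hSS' : S ⊆ S')
    (hsplit : Splits S (Set.univ : Set M)) (hcompact : CompactlySAtomic S (S' \ AnnSet R M))
    (hZM : S ∩ ZDiv R M = ∅) ⦃m₁ m₂ : M⦄ (hm₁ : m₁ ≠ 0) (hm₂ : SPrimitive S' m₂) :
    (∃ t ∈ locT hS S', LocalizedModule.mkLinearMap hS.submonoid M m₁ =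
      t • LocalizedModule.mkLinearMap hS.submonoid M m₂) ↔ ∃ σ ∈ S', m₁ = σ • m₂ := by
  constructor
  · rintro ⟨t, ht, h⟩
    obtain ⟨s, hs, s', hs', hss'⟩ := exists_smul_eq_smul_of_mk_eq_smul hS hS' hSS' ht h
    exact exists_eq_smul_of_smul_eq_smul hS hS' hSS' hsplit hcompact hZM hm₁ hm₂ hs hs' hss'
  · rintro ⟨σ, hσ, rfl⟩
    refine ⟨Localization.mk σ 1, ⟨σ, hσ, 1, rfl⟩, ?_⟩
    rw [LocalizedModule.mkLinearMap_apply, LocalizedModule.mkLinearMap_apply,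
      LocalizedModule.mk_smul_mk, mul_one]

end Factorization

theorem statement13_general {R : Type*} [CommRing R] {M : Type*} [AddCommGroup M] [Module R M]
    (S S' : Set R) (hS : Saturated S) (hS' : Saturated S') (hSS' : S ⊆ S')
    (hsplit : Splits S (Set.univ : Set M))
    (hcompact : CompactlySAtomic S (S' \ AnnSet R M))
    (hZM : S ∩ ZDiv R M = ∅) (hZR : S ∩ ZDiv R R = ∅)
    (y₁ y₂ : R) (hy₁ : y₁ ∈ S' \ (S ∪ AnnSet R M)) (hy₂ : y₂ ∈ S' \ (S ∪ AnnSet R M))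
    (hy₁i : Irred y₁) (hy₂i : Irred y₂)
    (m₁ m₂ : M) (hm₁ : m₁ ≠ 0) (hm₂ : m₂ ≠ 0)
    (hm₁p : SPrimitive S' m₁) (hm₂p : SPrimitive S' m₂) :
    (Assoc (algebraMap R (Localization hS.submonoid) y₁)
        (algebraMap R (Localization hS.submonoid) y₂) ↔ Assoc y₁ y₂) ∧
    (SAssoc (locT hS S') (LocalizedModule.mkLinearMap hS.submonoid M m₁)
        (LocalizedModule.mkLinearMap hS.submonoid M m₂) ↔ SAssoc S' m₁ m₂) := by
  have hdvd := algebraMap_dvd_algebraMap_iff_of_irred hS hS' hSS' hsplit hcompact hZM hZR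
  have hmk := exists_mk_eq_smul_iff hS hS' hSS' hsplit hcompact hZM
  constructor
  · rw [assoc_iff_dvd, assoc_iff_dvd, hdvd hy₁ hy₂ hy₁i hy₂i, hdvd hy₂ hy₁ hy₂i hy₁i]
  · exact and_congr (hmk hm₁ hm₂p) (hmk hm₂ hm₁p)

theorem statement13 {R : Type*} [CommRing R] {M : Type*} [AddCommGroup M] [Module R M]
    [Nontrivial M] (S S' : Set R) (hS : Saturated S) (hS' : Saturated S') (hSS' : S ⊆ S')
    (hsplit : Splits S (Set.univ : Set M))
    (hcompact : CompactlySAtomic S (S' \ AnnSet R M))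
    (hZM : S ∩ ZDiv R M = ∅) (hZR : S ∩ ZDiv R R = ∅)
    (y₁ y₂ : R) (hy₁ : y₁ ∈ S' \ (S ∪ AnnSet R M)) (hy₂ : y₂ ∈ S' \ (S ∪ AnnSet R M))
    (hy₁i : Irred y₁) (hy₂i : Irred y₂)
    (m₁ m₂ : M) (hm₁ : m₁ ≠ 0) (hm₂ : m₂ ≠ 0)
    (hm₁p : SPrimitive S' m₁) (hm₂p : SPrimitive S' m₂) :
    (Assoc (algebraMap R (Localization hS.submonoid) y₁)
        (algebraMap R (Localization hS.submonoid) y₂) ↔ Assoc y₁ y₂) ∧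
    (SAssoc (locT hS S') (LocalizedModule.mkLinearMap hS.submonoid M m₁)
        (LocalizedModule.mkLinearMap hS.submonoid M m₂) ↔ SAssoc S' m₁ m₂) :=
  statement13_general S S' hS hS' hSS' hsplit hcompact hZM hZR y₁ y₂ hy₁ hy₂ hy₁i hy₂i m₁ m₂ hm₁ hm₂
    hm₁p hm₂p

end FactorizationPaper
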